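/- Let G be a finite connected simple triangle-free graph with n ≥ 2 vertices and m edges, and let k ≥ 2 be an integer. If m ≤ 2(n + k − 2) and n > 8(k − 2), then the bondage number satisfies b(G) ≤ 7. -/

import Mathlib

/-- A finset `D` of vertices is a dominating set of `G` if every vertex not in `D`
is adjacent to some vertex in `D`. -/
def SimpleGraph.IsDominatingSet {V : Type*} (G : SimpleGraph V) (D : Finset V) : Prop :=
  ∀ v : V, v ∉ D → ∃ u ∈ D, G.Adj u v

/-- The domination number of `G`: the minimum cardinality of a dominating set. -/
noncomputable def SimpleGraph.dominationNumber {V : Type*} [Fintype V]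
    (G : SimpleGraph V) : ℕ :=
  sInf {k | ∃ D : Finset V, G.IsDominatingSet D ∧ D.card = k}

/-- The bondage number of `G`: the minimum cardinality of a set `B` of edges of `G`
whose removal increases the domination number. -/
noncomputable def SimpleGraph.bondageNumber {V : Type*} [Fintype V]
    (G : SimpleGraph V) : ℕ :=
  sInf {k | ∃ B : Finset (Sym2 V), ↑B ⊆ G.edgeSet ∧ B.card = k ∧
    G.dominationNumber < (G.deleteEdges ↑B).dominationNumber}

/-!
Let `u ≠ v` be vertices at distance at most two, joined through `w` (with `w = v` when they
are adjacent). Deleting every edge at `v` and every edge at `u` except `uw` isolates `v` and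
leaves `u` pendant at `w`; a minimum dominating set of the new graph then contains `v` and
either `u` or `w`, and trading these for `w` gives a smaller dominating set of `G`. Hence
`b(G) < deg u + deg v` (Hartnell–Rall).

So if `b(G) ≥ 8`, any two vertices at distance at most two have degree sum at least `9`. The
vertices of degree at most `4` then have pairwise disjoint neighbourhoods, made of vertices
of degree at least `5`, and each such vertex `x` can be compensated by the surplus of its
neighbours: `deg x * (9 - 2 deg x) ≥ 9 - 2 deg x`. The average degree is thus at least `9/2`,
i.e. `9n ≤ 4m`, contradicting `m ≤ 2(n + k - 2) < 9n/4`.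
-/

open Finset

namespace SimpleGraph

variable {V : Type*} [Fintype V]

section Domination

variable {G H : SimpleGraph V}

theorem dominationNumber_le_card {D : Finset V} (hD : G.IsDominatingSet D) :
    G.dominationNumber ≤ D.card :=
  Nat.sInf_le ⟨D, hD, rfl⟩

theorem exists_isDominatingSet_card_eq_dominationNumber (G : SimpleGraph V) :
    ∃ D : Finset V, G.IsDominatingSet D ∧ D.card = G.dominationNumber :=
  Nat.sInf_mem (s := {k | ∃ D : Finset V, G.IsDominatingSet D ∧ D.card = k})
    ⟨_, univ, fun v hv => absurd (mem_univ v) hv, rfl⟩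

theorem bondageNumber_le_card {B : Finset (Sym2 V)} (hB : ↑B ⊆ G.edgeSet)
    (hlt : G.dominationNumber < (G.deleteEdges ↑B).dominationNumber) :
    G.bondageNumber ≤ B.card :=
  Nat.sInf_le ⟨B, hB, rfl, hlt⟩

theorem dominationNumber_lt_of_isIsolated [DecidableEq V] (hHG : H ≤ G) {u v w : V}
    (huv : u ≠ v) (huw : G.Adj u w) (hwv : G.Adj w v ∨ w = v) (hv : H.IsIsolated v)
    (hu : ∀ x, H.Adj u x → x = w) :
    G.dominationNumber < H.dominationNumber := by
  obtain ⟨D', hD', hD'card⟩ := H.exists_isDominatingSet_card_eq_dominationNumber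
  have hvD' : v ∈ D' := by
    by_contra hvD'
    obtain ⟨y, -, hy⟩ := hD' v hvD'
    exact hv y hy.symm
  set D := insert w ((D'.erase u).erase v)
  have hD : G.IsDominatingSet D := by
    intro x hx
    have hxw : x ≠ w := by rintro rfl; exact hx (mem_insert_self x _)
    by_cases hxu : x = u
    · exact ⟨w, mem_insert_self w _, hxu ▸ huw.symm⟩
    by_cases hxv : x = v
    · exact ⟨w, mem_insert_self w _, hxv ▸ hwv.resolve_right (hxv ▸ hxw).symm⟩
    have hxD' : x ∉ D' := fun h =>
      hx (mem_insert_of_mem (mem_erase.2 ⟨hxv, mem_erase.2 ⟨hxu, h⟩⟩))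
    obtain ⟨y, hyD', hy⟩ := hD' x hxD'
    have hyv : y ≠ v := by rintro rfl; exact hv x hy
    have hyu : y ≠ u := by rintro rfl; exact hxw (hu x hy)
    exact ⟨y, mem_insert_of_mem (mem_erase.2 ⟨hyv, mem_erase.2 ⟨hyu, hyD'⟩⟩), hHG hy⟩
  have hDcard : D.card < D'.card := by
    by_cases huD' : u ∈ D'
    · calc D.card ≤ ((D'.erase u).erase v).card + 1 := card_insert_le _ _
        _ = (D'.erase u).card := card_erase_add_one (mem_erase.2 ⟨huv.symm, hvD'⟩)
        _ < D'.card := card_erase_lt_of_mem huD'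
    · -- `u` can only be dominated by `w`, so `w ∈ D'` and `D = D'.erase v`
      obtain ⟨y, hyD', hy⟩ := hD' u huD'
      obtain rfl : y = w := hu y hy.symm
      have hyv : y ≠ v := by rintro rfl; exact hv u hy
      have hyu : y ≠ u := (G.ne_of_adj huw).symm
      simp only [D]
      rw [insert_eq_of_mem (mem_erase.2 ⟨hyv, mem_erase.2 ⟨hyu, hyD'⟩⟩),
        erase_eq_of_notMem huD']
      exact card_erase_lt_of_mem hvD'
  calc G.dominationNumber ≤ D.card := dominationNumber_le_card hD
    _ < D'.card := hDcard
    _ = H.dominationNumber := hD'card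

theorem bondageNumber_lt_degree_add_degree [DecidableEq V] [DecidableRel G.Adj] {u v w : V}
    (huv : u ≠ v) (huw : G.Adj u w) (hwv : G.Adj w v ∨ w = v) :
    G.bondageNumber < G.degree u + G.degree v := by
  have hinc : ∀ {a b}, G.Adj a b → s(a, b) ∈ G.incidenceFinset a := fun h =>
    (mem_incidenceFinset _ _ _).2 ((mk'_mem_incidenceSet_left_iff G).2 h)
  set B := (G.incidenceFinset u).erase s(u, w) ∪ G.incidenceFinset v
  have hB : ↑B ⊆ G.edgeSet := by
    intro e he
    simp only [B, coe_union, coe_erase, Set.mem_union, Set.mem_sdiff, mem_coe,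
      mem_incidenceFinset] at he
    rcases he with ⟨he, -⟩ | he <;> exact he.1
  have hBcard : B.card < G.degree u + G.degree v := by
    rw [← card_incidenceFinset_eq_degree, ← card_incidenceFinset_eq_degree]
    calc B.card ≤ ((G.incidenceFinset u).erase s(u, w)).card + (G.incidenceFinset v).card :=
          card_union_le _ _
      _ < (G.incidenceFinset u).card + (G.incidenceFinset v).card :=
        Nat.add_lt_add_right (card_erase_lt_of_mem (hinc huw)) _
  have hv : (G.deleteEdges ↑B).IsIsolated v := by
    intro x hx
    obtain ⟨hvx, hnot⟩ := (deleteEdges_adj ..).1 hx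
    exact hnot (mem_coe.2 (mem_union_right _ (hinc hvx)))
  have hu : ∀ x, (G.deleteEdges ↑B).Adj u x → x = w := by
    intro x hx
    obtain ⟨hux, hnot⟩ := (deleteEdges_adj ..).1 hx
    by_contra hxw
    exact hnot (mem_coe.2 (mem_union_left _
      (mem_erase.2 ⟨fun h => hxw (Sym2.congr_right.1 h), hinc hux⟩)))
  calc G.bondageNumber ≤ B.card := bondageNumber_le_card hB
        (dominationNumber_lt_of_isIsolated (deleteEdges_le _) huv huw hwv hv hu)
    _ < G.degree u + G.degree v := hBcard

end Domination

section DegreeCounting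

variable (G : SimpleGraph V) [DecidableRel G.Adj]

theorem disjoint_neighborFinset_of_degree_le_four
    (hsum : ∀ u w v, u ≠ v → G.Adj u w → (G.Adj w v ∨ w = v) → 9 ≤ G.degree u + G.degree v)
    {x y : V} (hxy : x ≠ y) (hx : G.degree x ≤ 4) (hy : G.degree y ≤ 4) :
    Disjoint (G.neighborFinset x) (G.neighborFinset y) := by
  rw [Finset.disjoint_left]
  intro z hzx hzy
  have := hsum x z y hxy ((mem_neighborFinset ..).1 hzx)
    (Or.inl ((mem_neighborFinset ..).1 hzy).symm)
  omega

theorem sub_le_sum_neighborFinset_of_degree_le_four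
    (hadj : ∀ x y, G.Adj x y → 9 ≤ G.degree x + G.degree y) {x : V} (hx1 : 0 < G.degree x)
    (hx4 : G.degree x ≤ 4) :
    (9 - 2 * G.degree x : ℤ) ≤ ∑ y ∈ G.neighborFinset x, (2 * G.degree y - 9 : ℤ) := by
  have hsum := card_nsmul_le_sum (G.neighborFinset x) (fun y => (2 * G.degree y - 9 : ℤ))
    (9 - 2 * G.degree x) fun y hy => by
      have := hadj x y ((mem_neighborFinset ..).1 hy)
      omega
  rw [card_neighborFinset_eq_degree, nsmul_eq_mul] at hsum
  have hx1' : (1 : ℤ) ≤ G.degree x := by exact_mod_cast hx1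
  have hx4' : (G.degree x : ℤ) ≤ 4 := by exact_mod_cast hx4
  nlinarith

theorem nine_mul_card_le_four_mul_card_edgeFinset (hpos : ∀ v, 0 < G.degree v)
    (hsum : ∀ u w v, u ≠ v → G.Adj u w → (G.Adj w v ∨ w = v) → 9 ≤ G.degree u + G.degree v) :
    9 * Fintype.card V ≤ 4 * #G.edgeFinset := by
  classical
  set S : Finset V := {x | G.degree x ≤ 4}
  have hadj : ∀ x y, G.Adj x y → 9 ≤ G.degree x + G.degree y := fun x y h =>
    hsum x y y (G.ne_of_adj h) h (Or.inr rfl)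
  have hT : S.biUnion (G.neighborFinset ·) ⊆ ({y | ¬ G.degree y ≤ 4} : Finset V) := by
    intro y hy
    obtain ⟨x, hx, hxy⟩ := mem_biUnion.1 hy
    have := hadj x y ((mem_neighborFinset _ _ _).1 hxy)
    simp only [S, mem_filter, mem_univ, true_and] at hx ⊢
    omega
  have hdisj : (S : Set V).PairwiseDisjoint (G.neighborFinset ·) := fun x hx y hy hxy =>
    G.disjoint_neighborFinset_of_degree_le_four hsum hxy (mem_filter.1 hx).2 (mem_filter.1 hy).2
  have hlocal : ∀ x ∈ S,
      (9 - 2 * G.degree x : ℤ) ≤ ∑ y ∈ G.neighborFinset x, (2 * G.degree y - 9 : ℤ) :=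
    fun x hx => G.sub_le_sum_neighborFinset_of_degree_le_four hadj (hpos x) (mem_filter.1 hx).2
  have hnonneg : 0 ≤ ∑ x, (2 * G.degree x - 9 : ℤ) := calc
    (0 : ℤ) = ∑ x ∈ S, (2 * G.degree x - 9 : ℤ) + ∑ x ∈ S, (9 - 2 * G.degree x : ℤ) := by
        rw [← sum_add_distrib]; simp
    _ ≤ ∑ x ∈ S, (2 * G.degree x - 9 : ℤ) +
          ∑ x ∈ S, ∑ y ∈ G.neighborFinset x, (2 * G.degree y - 9 : ℤ) := by
        gcongr with x hx
        exact hlocal x hx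
    _ = ∑ x ∈ S, (2 * G.degree x - 9 : ℤ) +
          ∑ y ∈ S.biUnion (G.neighborFinset ·), (2 * G.degree y - 9 : ℤ) := by
        rw [sum_biUnion hdisj]
    _ ≤ ∑ x ∈ S, (2 * G.degree x - 9 : ℤ) +
          ∑ y with ¬ G.degree y ≤ 4, (2 * G.degree y - 9 : ℤ) := by
        refine add_le_add le_rfl (sum_le_sum_of_subset_of_nonneg hT fun y hy _ => ?_)
        have := (mem_filter.1 hy).2
        omega
    _ = ∑ x, (2 * G.degree x - 9 : ℤ) := sum_filter_add_sum_filter_not _ _ _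
  have hdeg : ∑ x, (G.degree x : ℤ) = 2 * #G.edgeFinset := by
    exact_mod_cast G.sum_degrees_eq_twice_card_edges
  rw [sum_sub_distrib, ← mul_sum, hdeg, sum_const, card_univ, nsmul_eq_mul] at hnonneg
  omega

end DegreeCounting

end SimpleGraph

theorem stmt_16_general {V : Type*} [Fintype V] [DecidableEq V] (G : SimpleGraph V)
    [DecidableRel G.Adj] (hconn : G.Connected)
    (hn : 2 ≤ Fintype.card V) (k : ℕ)
    (hm : G.edgeFinset.card ≤ 2 * (Fintype.card V + k - 2))
    (hbig : 8 * (k - 2) < Fintype.card V) :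
    G.bondageNumber ≤ 7 := by
  have : Nontrivial V := Fintype.one_lt_card_iff_nontrivial.1 hn
  by_contra! hb
  have hcount := G.nine_mul_card_le_four_mul_card_edgeFinset
    (hconn.preconnected.degree_pos_of_nontrivial ·) fun u w v huv huw hwv => by
      have := SimpleGraph.bondageNumber_lt_degree_add_degree huv huw hwv
      omega
  omega

theorem stmt_16 {V : Type*} [Fintype V] [DecidableEq V] (G : SimpleGraph V)
    [DecidableRel G.Adj] (hconn : G.Connected) (htf : G.CliqueFree 3)
    (hn : 2 ≤ Fintype.card V) (k : ℕ) (hk : 2 ≤ k)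
    (hm : G.edgeFinset.card ≤ 2 * (Fintype.card V + k - 2))
    (hbig : 8 * (k - 2) < Fintype.card V) :
    G.bondageNumber ≤ 7 :=
  stmt_16_general G hconn hn k hm hbig
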